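/- Fix an integer N ≥ 3 and reals δ, θ ∈ ℝ, and regard E_p as a function of the selection intensity β > 0 as well. Then lim_{β→+∞} E_p(θ) = (N²θ/2)·(1 + H_N) if θ < −δ; lim_{β→+∞} E_p(θ) = N²θH_N if θ = −δ; and lim_{β→+∞} E_p(θ) = (N²θ/2)·(H_N + 1/(N−1)) if θ > −δ. -/

import Mathlib

/-!
With `x = β(θ+δ)`, the probabilities of a step up and down are the logistic values
`a = σ(x)` and `b = σ(-x)`, and `I - U` factors as `diag(p) * L`, where `L` is the tridiagonal
matrix with diagonal `a + b`, superdiagonal `-a` and subdiagonal `-b`. Writing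
`h n = Σ_{i<n} a^i b^(n-1-i)`, the matrix `G` with
`G k j = h k * h (N-j) * a^(j-k)` for `k ≤ j` and `G k j = h j * h (N-k) * b^(k-j)` for `j ≤ k`
satisfies `L * G = h N • 1`: away from the diagonal its columns solve the recurrence of `L`, and
they vanish at `0` and `N`. Hence `E_p` is a rational function `F(a, b)` whose denominator `h N`
does not vanish at `(1, 0)`, `(0, 1)` and `(1/2, 1/2)`. As `β → ∞` the pair `(a, b)` tends to
`(1, 0)` if `θ > -δ` and to `(0, 1)` if `θ < -δ`, and equals `(1/2, 1/2)` if `θ = -δ`; the three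
limits are the values of `F` there, computed from `h n (1, 0) = h n (0, 1) = 1` and
`h n (c, c) = n c^(n-1)`.
-/

open Real Finset Filter Topology Matrix

/-- Transition matrix `U` between the transient states of the absorbing Markov chain,
for population size `N`, selection intensity `β`, payoff difference `δ` and incentive `θ`.
The index `i : Fin (N-1)` corresponds to the state with `i+1` cooperators;
`x = β(θ+δ)` and `p_i = i(N-i)/N²`. -/
noncomputable def Umat (N : ℕ) (β δ θ : ℝ) : Matrix (Fin (N - 1)) (Fin (N - 1)) ℝ :=
  fun i j =>
    let x : ℝ := β * (θ + δ)
    let p : ℝ := ((i : ℕ) + 1 : ℝ) * ((N : ℝ) - ((i : ℕ) + 1 : ℝ)) / (N : ℝ) ^ 2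
    if (j : ℕ) = (i : ℕ) + 1 then p / (1 + Real.exp (-x))
    else if (j : ℕ) + 1 = (i : ℕ) then p / (1 + Real.exp x)
    else if j = i then 1 - p / (1 + Real.exp (-x)) - p / (1 + Real.exp x)
    else 0

/-- The fundamental matrix `𝒩 = (I - U)⁻¹` of the absorbing Markov chain. -/
noncomputable def fund (N : ℕ) (β δ θ : ℝ) : Matrix (Fin (N - 1)) (Fin (N - 1)) ℝ :=
  (1 - Umat N β δ θ)⁻¹

/-- Expected total cost of institutional reward,
`E_r(θ) = (θ/2) Σ_{i=1}^{N-1} (n_{1,i} + n_{N-1,i}) · i`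
(row `1` is index `0` and row `N-1` is index `N-2`; junk value `0` for `N < 3`). -/
noncomputable def Ereward (N : ℕ) (β δ θ : ℝ) : ℝ :=
  if h : 3 ≤ N then
    (θ / 2) * ∑ j : Fin (N - 1),
      (fund N β δ θ ⟨0, by omega⟩ j + fund N β δ θ ⟨N - 2, by omega⟩ j) * ((j : ℕ) + 1 : ℝ)
  else 0

/-- Expected total cost of institutional punishment,
`E_p(θ) = (θ/2) Σ_{i=1}^{N-1} (n_{1,i} + n_{N-1,i}) · (N - i)`. -/
noncomputable def Epunish (N : ℕ) (β δ θ : ℝ) : ℝ :=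
  if h : 3 ≤ N then
    (θ / 2) * ∑ j : Fin (N - 1),
      (fund N β δ θ ⟨0, by omega⟩ j + fund N β δ θ ⟨N - 2, by omega⟩ j)
        * ((N : ℝ) - ((j : ℕ) + 1 : ℝ))
  else 0

/-- Harmonic number `H_N = Σ_{j=1}^{N-1} 1/j`. -/
noncomputable def harmonicNum (N : ℕ) : ℝ := ∑ j ∈ Finset.range (N - 1), (1 : ℝ) / ((j : ℕ) + 1)

section Green

variable {R : Type*} [CommRing R] (a b : R)

def geomSum₂ (n : ℕ) : R := ∑ i ∈ range n, a ^ i * b ^ (n - 1 - i)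

@[simp] lemma geomSum₂_zero : geomSum₂ a b 0 = 0 := by simp [geomSum₂]

@[simp] lemma geomSum₂_one : geomSum₂ a b 1 = 1 := by simp [geomSum₂]

lemma geomSum₂_comm (n : ℕ) : geomSum₂ a b n = geomSum₂ b a n := geom_sum₂_comm a b n

lemma geomSum₂_succ (n : ℕ) : geomSum₂ a b (n + 1) = a ^ n + b * geomSum₂ a b n :=
  geom_sum₂_succ_eq a b

lemma geomSum₂_succ_succ (n : ℕ) :
    geomSum₂ a b (n + 2) = (a + b) * geomSum₂ a b (n + 1) - a * b * geomSum₂ a b n := by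
  rw [geomSum₂_succ a b (n + 1), geomSum₂_succ a b n, pow_succ]
  ring

lemma geomSum₂_add (m n : ℕ) :
    geomSum₂ a b (m + n) = b ^ n * geomSum₂ a b m + a ^ m * geomSum₂ a b n := by
  induction n with
  | zero => simp
  | succ n ih => rw [← add_assoc, geomSum₂_succ, ih, geomSum₂_succ]; ring

lemma geomSum₂_self (n : ℕ) : geomSum₂ a a n = n * a ^ (n - 1) := geom_sum₂_self a n

lemma geomSum₂_one_zero {n : ℕ} (hn : n ≠ 0) : geomSum₂ (1 : R) 0 n = 1 := by
  obtain ⟨n, rfl⟩ := Nat.exists_eq_succ_of_ne_zero hn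
  simp [geomSum₂_succ]

lemma geomSum₂_zero_one {n : ℕ} (hn : n ≠ 0) : geomSum₂ (0 : R) 1 n = 1 := by
  rw [geomSum₂_comm, geomSum₂_one_zero hn]

def green (N k j : ℕ) : R :=
  if k ≤ j then geomSum₂ a b k * geomSum₂ a b (N - j) * a ^ (j - k)
  else geomSum₂ a b j * geomSum₂ a b (N - k) * b ^ (k - j)

lemma green_of_le {N k j : ℕ} (h : k ≤ j) :
    green a b N k j = geomSum₂ a b k * geomSum₂ a b (N - j) * a ^ (j - k) := if_pos h

lemma green_of_ge {N k j : ℕ} (h : j ≤ k) :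
    green a b N k j = geomSum₂ a b j * geomSum₂ a b (N - k) * b ^ (k - j) := by
  rcases h.eq_or_lt with rfl | h
  · simp [green]
  · exact if_neg h.not_ge

lemma green_recurrence {N k j : ℕ} (hk : 1 ≤ k) (hkN : k < N) (hj : j < N) :
    (a + b) * green a b N k j - a * green a b N (k + 1) j - b * green a b N (k - 1) j
      = if k = j then geomSum₂ a b N else 0 := by
  obtain ⟨m, rfl⟩ : ∃ m, k = m + 1 := ⟨k - 1, by omega⟩
  rw [Nat.add_sub_cancel]
  rcases lt_trichotomy (m + 1) j with hlt | rfl | hgt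
  · obtain ⟨d, rfl⟩ : ∃ d, j = m + d + 2 := ⟨j - m - 2, by omega⟩
    rw [if_neg hlt.ne, green_of_le a b hlt.le, green_of_le a b (by omega : m + 1 + 1 ≤ _),
      green_of_le a b (by omega : m ≤ _), show m + d + 2 - (m + 1) = d + 1 by omega,
      show m + d + 2 - (m + 1 + 1) = d by omega, show m + d + 2 - m = d + 2 by omega]
    linear_combination (-(a ^ (d + 1)) * geomSum₂ a b (N - (m + d + 2))) *
      geomSum₂_succ_succ a b m
  · obtain ⟨n, hn⟩ : ∃ n, N - (m + 1) = n + 1 := ⟨N - m - 2, by omega⟩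
    rw [if_pos rfl, green_of_le a b le_rfl, green_of_ge a b (by omega : m + 1 ≤ m + 1 + 1),
      green_of_le a b (by omega : m ≤ m + 1), show N - (m + 1 + 1) = n by omega, hn,
      Nat.sub_self, Nat.add_sub_cancel_left, Nat.add_sub_cancel_left]
    -- expand `h N` by `geomSum₂_add`, then trade `a ^ (m + 1)` and `b ^ (n + 1)` for
    -- lower `h`'s via the three-term recurrence
    have hN := geomSum₂_add a b (m + 1) (n + 1)
    rw [show m + 1 + (n + 1) = N by omega] at hN
    have hb := geomSum₂_succ_succ b a n
    have hb' := geomSum₂_succ b a (n + 1)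
    simp only [geomSum₂_comm b a] at hb hb'
    linear_combination -hN - (hb - hb') * geomSum₂ a b (m + 1) -
      (geomSum₂_succ_succ a b m - geomSum₂_succ a b (m + 1)) * geomSum₂ a b (n + 1)
  · obtain ⟨e, rfl⟩ : ∃ e, m = j + e := ⟨m - j, by omega⟩
    obtain ⟨n, hn⟩ : ∃ n, N = j + e + n + 2 := ⟨N - j - e - 2, by omega⟩
    rw [if_neg hgt.ne', green_of_ge a b hgt.le, green_of_ge a b (by omega : j ≤ j + e + 1 + 1),
      green_of_ge a b (by omega : j ≤ j + e), hn, show j + e + n + 2 - (j + e + 1) = n + 1 by omega,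
      show j + e + n + 2 - (j + e + 1 + 1) = n by omega,
      show j + e + n + 2 - (j + e) = n + 2 by omega, show j + e + 1 - j = e + 1 by omega,
      show j + e + 1 + 1 - j = e + 2 by omega, Nat.add_sub_cancel_left]
    linear_combination (-(b ^ (e + 1)) * geomSum₂ a b j) * geomSum₂_succ_succ a b n

end Green

lemma geomSum₂_pos {R : Type*} [CommRing R] [PartialOrder R] [IsStrictOrderedRing R] {a b : R}
    (ha : 0 < a) (hb : 0 < b) {n : ℕ} (hn : n ≠ 0) : 0 < geomSum₂ a b n :=
  sum_pos (fun i _ => by positivity) (nonempty_range_iff.mpr hn)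

section BirthDeath

variable {R : Type*} [CommRing R]

def birthDeathMatrix (n : ℕ) (a b : R) : Matrix (Fin n) (Fin n) R := fun i l =>
  if (l : ℕ) = (i : ℕ) + 1 then -a else if (l : ℕ) + 1 = (i : ℕ) then -b
  else if l = i then a + b else 0

lemma birthDeathMatrix_mulVec {n : ℕ} (a b : R) {w : ℕ → R} (h0 : w 0 = 0) (hn : w (n + 1) = 0)
    (i : Fin n) :
    (birthDeathMatrix n a b *ᵥ fun l => w (l + 1)) i
      = (a + b) * w (i + 1) - a * w (i + 2) - b * w i := by
  obtain ⟨k, hk⟩ := i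
  have hsplit : ∀ l : ℕ,
      (if l = k + 1 then -a else if l + 1 = k then -b else if l = k then a + b else 0) * w (l + 1)
      = ((if l = k + 1 then -a * w (k + 2) else 0) + (if l + 1 = k then -b * w k else 0))
        + (if l = k then (a + b) * w (k + 1) else 0) := by
    intro l
    split_ifs <;> subst_vars <;> first | omega | ring1
  have hprev : ∑ l ∈ range n, (if l + 1 = k then -b * w k else 0) = -b * w k := by
    cases k with
    | zero => simp [h0]
    | succ k => simp [sum_ite_eq', show k < n by omega]
  simp only [mulVec, dotProduct, birthDeathMatrix, Fin.ext_iff]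
  rw [Fin.sum_univ_eq_sum_range (fun l => (if l = k + 1 then -a else if l + 1 = k then -b
      else if l = k then a + b else 0) * w (l + 1))]
  simp only [hsplit, sum_add_distrib, hprev, sum_ite_eq', mem_range, if_pos hk]
  split_ifs
  · ring
  · rw [show k + 2 = n + 1 by omega, hn]
    ring

lemma birthDeathMatrix_mul_green (N : ℕ) (a b : R) :
    birthDeathMatrix (N - 1) a b * Matrix.of (fun i j : Fin (N - 1) => green a b N (i + 1) (j + 1))
      = geomSum₂ a b N • 1 := by
  ext i j
  have hi := i.isLt
  have hj := j.isLt
  have hcol := birthDeathMatrix_mulVec a b (w := fun k => green a b N k (j + 1))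
    (by simp [green]) (by rw [Nat.sub_add_cancel (by omega), green_of_ge a b (by omega)]; simp) i
  simp only [mulVec, dotProduct] at hcol
  rw [mul_apply]
  simp only [of_apply, hcol, Matrix.smul_apply, one_apply, Fin.ext_iff, smul_eq_mul, mul_ite,
    mul_one, mul_zero]
  simpa only [Nat.add_sub_cancel, Nat.add_right_cancel_iff] using
    green_recurrence a b (N := N) (k := i + 1) (j := j + 1) (by omega) (by omega) (by omega)

end BirthDeath

lemma inv_diagonal_mul_of_mul_eq_smul_one {n K : Type*} [Fintype n] [DecidableEq n] [Field K]
    {d : n → K} (hd : ∀ i, d i ≠ 0) {L G : Matrix n n K} {c : K} (hc : c ≠ 0)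
    (h : L * G = c • 1) : (diagonal d * L)⁻¹ = c⁻¹ • G * diagonal d⁻¹ := by
  refine inv_eq_right_inv ?_
  calc diagonal d * L * (c⁻¹ • G * diagonal d⁻¹)
      = c⁻¹ • (diagonal d * (L * G) * diagonal d⁻¹) := by
        simp only [Matrix.mul_assoc, Matrix.mul_smul, Matrix.smul_mul]
    _ = diagonal (d * d⁻¹) := by
        rw [h, Matrix.mul_smul, Matrix.smul_mul, Matrix.mul_one, diagonal_mul_diagonal, smul_smul,
          inv_mul_cancel₀ hc, one_smul]
        rfl
    _ = 1 := by
        rw [← diagonal_one]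
        congr 1
        ext i
        simp [hd i]

noncomputable def pairProb (N : ℕ) (i : Fin (N - 1)) : ℝ :=
  ((i : ℕ) + 1 : ℝ) * ((N : ℝ) - ((i : ℕ) + 1 : ℝ)) / (N : ℝ) ^ 2

lemma pairProb_pos (N : ℕ) (i : Fin (N - 1)) : 0 < pairProb N i := by
  have hiN : ((i : ℕ) + 1 : ℝ) < N := by exact_mod_cast (show (i : ℕ) + 1 < N by omega)
  exact div_pos (mul_pos (by positivity) (by linarith)) (pow_pos (by linarith) 2)

lemma one_sub_Umat (N : ℕ) (β δ θ : ℝ) :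
    1 - Umat N β δ θ = diagonal (pairProb N) *
      birthDeathMatrix (N - 1) (sigmoid (β * (θ + δ))) (sigmoid (-(β * (θ + δ)))) := by
  ext i j
  simp only [Matrix.sub_apply, one_apply, Umat, diagonal_mul, birthDeathMatrix, pairProb,
    sigmoid_def, neg_neg]
  split_ifs <;> first | omega | ring1

lemma fund_apply {N : ℕ} (β δ θ : ℝ) (i j : Fin (N - 1)) :
    fund N β δ θ i j =
      green (sigmoid (β * (θ + δ))) (sigmoid (-(β * (θ + δ)))) N (i + 1) (j + 1) /
        (geomSum₂ (sigmoid (β * (θ + δ))) (sigmoid (-(β * (θ + δ)))) N * pairProb N j) := by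
  have hN : N ≠ 0 := by have := i.isLt; omega
  rw [fund, one_sub_Umat, inv_diagonal_mul_of_mul_eq_smul_one (fun i => (pairProb_pos N i).ne')
    (geomSum₂_pos (sigmoid_pos _) (sigmoid_pos _) hN).ne' (birthDeathMatrix_mul_green N _ _)]
  simp only [mul_diagonal, Matrix.smul_apply, of_apply, Pi.inv_apply, smul_eq_mul]
  field_simp

noncomputable def punishmentCost (N : ℕ) (θ a b : ℝ) : ℝ :=
  θ / 2 * (∑ j ∈ range (N - 1), (N : ℝ) ^ 2 / (j + 1) *
    (geomSum₂ a b (N - 1 - j) * a ^ j + geomSum₂ a b (j + 1) * b ^ (N - 2 - j))) / geomSum₂ a b N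

lemma Epunish_eq_punishmentCost {N : ℕ} (hN : 3 ≤ N) (β δ θ : ℝ) :
    Epunish N β δ θ =
      punishmentCost N θ (sigmoid (β * (θ + δ))) (sigmoid (-(β * (θ + δ)))) := by
  rw [Epunish, dif_pos hN]
  simp only [fund_apply]
  set a := sigmoid (β * (θ + δ))
  set b := sigmoid (-(β * (θ + δ)))
  rw [punishmentCost, mul_div_assoc, sum_div,
    ← Fin.sum_univ_eq_sum_range (fun j => (N : ℝ) ^ 2 / (j + 1) *
      (geomSum₂ a b (N - 1 - j) * a ^ j + geomSum₂ a b (j + 1) * b ^ (N - 2 - j)) / geomSum₂ a b N)]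
  congr 1
  refine sum_congr rfl fun j _ => ?_
  have hj := j.isLt
  have hjN : ((j : ℕ) + 1 : ℝ) < N := by exact_mod_cast (show (j : ℕ) + 1 < N by omega)
  have hNj : (N : ℝ) - ((j : ℕ) + 1) ≠ 0 := by linarith
  rw [green_of_le a b (by simp), green_of_ge a b (by simp; omega)]
  simp only [zero_add, geomSum₂_one, one_mul, mul_one, pairProb, Nat.add_sub_cancel,
    show N - ((j : ℕ) + 1) = N - 1 - j by omega,
    show N - 2 + 1 - ((j : ℕ) + 1) = N - 2 - j by omega,
    show N - (N - 2 + 1) = 1 by omega]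
  field_simp

lemma sum_range_mul_zero_pow_sub {M : Type*} [Semiring M] (f : ℕ → M) (n : ℕ) :
    ∑ j ∈ range (n + 1), f j * 0 ^ (n - j) = f n := by
  rw [sum_range_succ, sum_eq_zero fun j hj => by rw [zero_pow (by simp at hj; omega), mul_zero],
    zero_add, Nat.sub_self, pow_zero, mul_one]

lemma sum_range_zero_pow_mul {M : Type*} [Semiring M] (f : ℕ → M) (n : ℕ) :
    ∑ j ∈ range (n + 1), 0 ^ j * f j = f 0 := by
  rw [sum_range_succ', sum_eq_zero fun j _ => by rw [zero_pow (by omega), zero_mul], zero_add,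
    pow_zero, one_mul]

lemma sum_sq_div_eq_mul_harmonicNum (N : ℕ) :
    ∑ j ∈ range (N - 1), (N : ℝ) ^ 2 / (j + 1) = (N : ℝ) ^ 2 * harmonicNum N := by
  simp only [harmonicNum, mul_sum, mul_one_div]

lemma punishmentCost_one_zero {N : ℕ} (hN : 2 ≤ N) (θ : ℝ) :
    punishmentCost N θ 1 0 = (N : ℝ) ^ 2 * θ / 2 * (harmonicNum N + 1 / ((N : ℝ) - 1)) := by
  have hlast : ∑ j ∈ range (N - 1), (N : ℝ) ^ 2 / (j + 1) * (0 : ℝ) ^ (N - 2 - j)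
      = (N : ℝ) ^ 2 / ((N : ℝ) - 1) := by
    rw [show N - 1 = N - 2 + 1 by omega,
      sum_range_mul_zero_pow_sub (fun j => (N : ℝ) ^ 2 / (j + 1))]
    push_cast [Nat.cast_sub hN]
    ring1
  have hterm : ∀ j ∈ range (N - 1), geomSum₂ (1 : ℝ) 0 (N - 1 - j) * 1 ^ j +
      geomSum₂ (1 : ℝ) 0 (j + 1) * 0 ^ (N - 2 - j) = 1 + 0 ^ (N - 2 - j) := fun j hj => by
    rw [geomSum₂_one_zero (by simp at hj; omega), geomSum₂_one_zero (by omega), one_pow,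
      mul_one, one_mul]
  rw [punishmentCost, geomSum₂_one_zero (by omega), div_one,
    sum_congr rfl fun j hj => congrArg _ (hterm j hj)]
  simp only [mul_add, mul_one, sum_add_distrib, hlast, sum_sq_div_eq_mul_harmonicNum]
  ring1

lemma punishmentCost_zero_one {N : ℕ} (hN : 2 ≤ N) (θ : ℝ) :
    punishmentCost N θ 0 1 = (N : ℝ) ^ 2 * θ / 2 * (1 + harmonicNum N) := by
  have hfirst : ∑ j ∈ range (N - 1), (N : ℝ) ^ 2 / (j + 1) * (0 : ℝ) ^ j = (N : ℝ) ^ 2 := by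
    simp_rw [mul_comm _ ((0 : ℝ) ^ _)]
    rw [show N - 1 = N - 2 + 1 by omega, sum_range_zero_pow_mul (fun j => (N : ℝ) ^ 2 / (j + 1))]
    simp
  have hterm : ∀ j ∈ range (N - 1), geomSum₂ (0 : ℝ) 1 (N - 1 - j) * 0 ^ j +
      geomSum₂ (0 : ℝ) 1 (j + 1) * 1 ^ (N - 2 - j) = 0 ^ j + 1 := fun j hj => by
    rw [geomSum₂_zero_one (by simp at hj; omega), geomSum₂_zero_one (by omega), one_pow,
      mul_one, one_mul]
  rw [punishmentCost, geomSum₂_zero_one (by omega), div_one,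
    sum_congr rfl fun j hj => congrArg _ (hterm j hj)]
  simp only [mul_add, mul_one, sum_add_distrib, hfirst, sum_sq_div_eq_mul_harmonicNum]
  ring1

lemma punishmentCost_self {N : ℕ} (hN : 2 ≤ N) (θ : ℝ) {c : ℝ} (hc : c ≠ 0) :
    punishmentCost N θ c c = (N : ℝ) ^ 2 * θ * harmonicNum N / (2 * c) := by
  have hterm : ∀ j ∈ range (N - 1), geomSum₂ c c (N - 1 - j) * c ^ j +
      geomSum₂ c c (j + 1) * c ^ (N - 2 - j) = N * c ^ (N - 2) := fun j hj => by
    rw [mem_range] at hj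
    rw [geomSum₂_self, geomSum₂_self, Nat.add_sub_cancel, mul_assoc, mul_assoc, ← pow_add,
      ← pow_add, show N - 1 - j - 1 + j = N - 2 by omega, show j + (N - 2 - j) = N - 2 by omega,
      ← add_mul, ← Nat.cast_add, show N - 1 - j + (j + 1) = N by omega]
  rw [punishmentCost, geomSum₂_self, sum_congr rfl fun j hj => congrArg _ (hterm j hj), ← sum_mul,
    sum_sq_div_eq_mul_harmonicNum, show N - 1 = N - 2 + 1 by omega, pow_succ c]
  field_simp

lemma tendsto_punishmentCost {ι : Type*} {l : Filter ι} {a b : ι → ℝ} {a₀ b₀ : ℝ}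
    (ha : Tendsto a l (𝓝 a₀)) (hb : Tendsto b l (𝓝 b₀)) (N : ℕ) (θ : ℝ)
    (h : geomSum₂ a₀ b₀ N ≠ 0) :
    Tendsto (fun t => punishmentCost N θ (a t) (b t)) l (𝓝 (punishmentCost N θ a₀ b₀)) := by
  have hg : ∀ n, Continuous fun p : ℝ × ℝ => geomSum₂ p.1 p.2 n := fun n =>
    continuous_finsetSum _ fun i _ => by fun_prop
  have hcont : ContinuousAt (fun p : ℝ × ℝ => punishmentCost N θ p.1 p.2) (a₀, b₀) := by
    unfold punishmentCost
    refine ContinuousAt.div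
      (continuous_const.mul (continuous_finsetSum _ fun j _ => ?_)).continuousAt
      (hg N).continuousAt h
    exact continuous_const.mul (((hg _).mul (by fun_prop)).add ((hg _).mul (by fun_prop)))
  have hab : Tendsto (fun t => (a t, b t)) l (𝓝 (a₀, b₀)) := ha.prodMk_nhds hb
  exact (hcont.tendsto.comp hab).congr fun t => rfl

/-- Large-selection limits of the punishment cost: as β → +∞, E_p(θ) tends to
(N²θ/2)(1 + H_N) if θ < −δ, to N²θH_N if θ = −δ, and to (N²θ/2)(H_N + 1/(N−1)) if θ > −δ. -/
theorem large_selection_limit_punishment (N : ℕ) (hN : 3 ≤ N) (δ θ : ℝ) :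
    (θ < -δ → Tendsto (fun β : ℝ => Epunish N β δ θ) atTop
      (𝓝 ((N : ℝ) ^ 2 * θ / 2 * (1 + harmonicNum N)))) ∧
    (θ = -δ → Tendsto (fun β : ℝ => Epunish N β δ θ) atTop
      (𝓝 ((N : ℝ) ^ 2 * θ * harmonicNum N))) ∧
    (θ > -δ → Tendsto (fun β : ℝ => Epunish N β δ θ) atTop
      (𝓝 ((N : ℝ) ^ 2 * θ / 2 * (harmonicNum N + 1 / ((N : ℝ) - 1))))) := by
  simp only [Epunish_eq_punishmentCost hN]
  refine ⟨fun h => ?_, fun h => ?_, fun h => ?_⟩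
  · have hx : Tendsto (fun β : ℝ => β * (θ + δ)) atTop atBot :=
      tendsto_id.atTop_mul_const_of_neg (by linarith)
    rw [← punishmentCost_zero_one (by omega)]
    exact tendsto_punishmentCost (tendsto_sigmoid_atBot.comp hx)
      (tendsto_sigmoid_atTop.comp (tendsto_neg_atBot_atTop.comp hx)) N θ
      (by rw [geomSum₂_zero_one (by omega)]; exact one_ne_zero)
  · simp only [show θ + δ = 0 by linarith, mul_zero, neg_zero, sigmoid_zero,
      punishmentCost_self (by omega : 2 ≤ N) θ (inv_ne_zero two_ne_zero),
      mul_inv_cancel₀ (two_ne_zero' ℝ), div_one]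
    exact tendsto_const_nhds
  · have hx : Tendsto (fun β : ℝ => β * (θ + δ)) atTop atTop :=
      tendsto_id.atTop_mul_const (by linarith)
    rw [← punishmentCost_one_zero (by omega)]
    exact tendsto_punishmentCost (tendsto_sigmoid_atTop.comp hx)
      (tendsto_sigmoid_atBot.comp (tendsto_neg_atTop_atBot.comp hx)) N θ
      (by rw [geomSum₂_one_zero (by omega)]; exact one_ne_zero)
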